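/- arXiv:1807.06605 — 3 statements merged into one kernel-verified Lean document; each statement's English description precedes it below -/
import Mathlib

section
/- Let k, β be positive integers and 0 ≤ l_1,...,l_{k−1} ≤ 2β, and set l_k = kβ − (l_1 + ... + l_{k−1}) (assume l_k lies in [0, 2β] as an integer). With α the block vector of length 2kβ as above, the number of pairs (m,n) with 1 ≤ m ≤ kβ < n ≤ 2kβ and α_m = α_n equals ∑_{j=1}^k l_j(2β − l_j). In particular, (−1)^{∑_{j=1}^k l_j(2β−l_j)} = (−1)^{kβ}. -/
/-- The vector `α` of length `2kβ`: blocks `θ_1^{l_1}, …, θ_{k-1}^{l_{k-1}},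
θ_k^{2β}, θ_{k-1}^{2β-l_{k-1}}, …, θ_1^{2β-l_1}` (with `θ` 0-indexed: `θ 0, …, θ (k-1)`). -/
def alphaList (k β : ℕ) (l : ℕ → ℕ) (θ : ℕ → ℝ) : List ℝ :=
  ((List.range (k - 1)).flatMap fun j => List.replicate (l j) (θ j)) ++
    List.replicate (2 * β) (θ (k - 1)) ++
      ((List.range (k - 1)).reverse.flatMap fun j => List.replicate (2 * β - l j) (θ j))

open scoped Classical in
noncomputable def cntCPP (T : List ℝ) (x : ℝ) : ℕ :=
  ∑ n ∈ Finset.range T.length, if T.getD n 0 = x then 1 else 0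

open scoped Classical in
lemma cntCPP_cons (a : ℝ) (T : List ℝ) (x : ℝ) :
    cntCPP (a :: T) x = (if a = x then 1 else 0) + cntCPP T x := by
  simp only [cntCPP, List.length_cons, Finset.sum_range_succ' _ T.length,
    List.getD_cons_succ, List.getD_cons_zero]
  ring

lemma cntCPP_nil (x : ℝ) : cntCPP [] x = 0 := by simp [cntCPP]

lemma cntCPP_append (A B : List ℝ) (x : ℝ) :
    cntCPP (A ++ B) x = cntCPP A x + cntCPP B x := by
  induction A with
  | nil => simp [cntCPP_nil]
  | cons a A ih => simp only [List.cons_append, cntCPP_cons, ih]; ring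

open scoped Classical in
lemma cntCPP_replicate (n : ℕ) (a x : ℝ) :
    cntCPP (List.replicate n a) x = if a = x then n else 0 := by
  induction n with
  | zero => simp [cntCPP_nil]
  | succ n ih =>
    rw [List.replicate_succ, cntCPP_cons, ih]
    split <;> omega

lemma cntCPP_flatMap (L : List ℕ) (f : ℕ → List ℝ) (x : ℝ) :
    cntCPP (L.flatMap f) x = (L.map fun j => cntCPP (f j) x).sum := by
  induction L with
  | nil => simp [cntCPP_nil]
  | cons a L ih => rw [List.flatMap_cons, cntCPP_append, ih, List.map_cons, List.sum_cons]

lemma sum_getD (g : ℝ → ℕ) (T : List ℝ) :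
    ∑ m ∈ Finset.range T.length, g (T.getD m 0) = (T.map g).sum := by
  induction T with
  | nil => simp
  | cons a T ih =>
    rw [List.length_cons, Finset.sum_range_succ' _ T.length]
    simp only [List.getD_cons_succ, List.getD_cons_zero, ih, List.map_cons, List.sum_cons]
    ring

lemma map_flatMap_replicate_sum (g : ℝ → ℕ) (L : List ℕ) (c : ℕ → ℕ) (θ : ℕ → ℝ) :
    ((L.flatMap fun j => List.replicate (c j) (θ j)).map g).sum
      = (L.map fun j => c j * g (θ j)).sum := by
  induction L with
  | nil => simp
  | cons a L ih =>
    rw [List.flatMap_cons, List.map_append, List.sum_append, ih, List.map_replicate,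
      List.sum_replicate, List.map_cons, List.sum_cons, smul_eq_mul]


open scoped Classical in
/-- With `l_k := kβ - (l_1 + ⋯ + l_{k-1})` (assumed to lie in `[0,2β]`), the number of
pairs `(m,n)` with `m ≤ kβ < n` (1-indexed) and `α_m = α_n` equals
`∑_{j=1}^{k} l_j(2β - l_j)`; in particular `(-1)^{∑_j l_j(2β-l_j)} = (-1)^{kβ}`. -/
theorem card_pairs_A_and_parity (k β : ℕ) (hk : 1 ≤ k) (hβ : 1 ≤ β) (l : ℕ → ℕ)
    (hl : ∀ j < k - 1, l j ≤ 2 * β)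
    (hsum : ∑ j ∈ Finset.range (k - 1), l j ≤ k * β)
    (hlk : k * β - ∑ j ∈ Finset.range (k - 1), l j ≤ 2 * β) (θ : ℕ → ℝ)
    (hθ : ∀ i < k, ∀ j < k, θ i = θ j → i = j) :
    ((Finset.range (2 * k * β) ×ˢ Finset.range (2 * k * β)).filter
        (fun p => p.1 < k * β ∧ k * β ≤ p.2 ∧
          (alphaList k β l θ).getD p.1 0 = (alphaList k β l θ).getD p.2 0)).card =
      (∑ j ∈ Finset.range (k - 1), l j * (2 * β - l j)) +
        (k * β - ∑ j ∈ Finset.range (k - 1), l j) *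
          (2 * β - (k * β - ∑ j ∈ Finset.range (k - 1), l j)) ∧
    ((-1 : ℤ) ^ ((∑ j ∈ Finset.range (k - 1), l j * (2 * β - l j)) +
        (k * β - ∑ j ∈ Finset.range (k - 1), l j) *
          (2 * β - (k * β - ∑ j ∈ Finset.range (k - 1), l j))) = (-1 : ℤ) ^ (k * β)) := by
  classical
  set s := ∑ j ∈ Finset.range (k - 1), l j with hs
  set lk := k * β - s with hlkdef
  have h2kb : 2 * k * β = 2 * (k * β) := by ring
  have hk1 : k - 1 < k := by omega
  -- the pieces
  set A := (List.range (k - 1)).flatMap fun j => List.replicate (l j) (θ j) with hA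
  set B := (List.range (k - 1)).reverse.flatMap fun j => List.replicate (2 * β - l j) (θ j)
    with hB
  set F := A ++ List.replicate lk (θ (k - 1)) with hF
  set Sl := List.replicate (2 * β - lk) (θ (k - 1)) ++ B with hSl
  have hsplit : alphaList k β l θ = F ++ Sl := by
    rw [alphaList, hF, hSl, ← hA, ← hB,
      show 2 * β = lk + (2 * β - lk) by omega]
    simp only [List.append_assoc]
    rw [List.replicate_add, List.append_assoc, Nat.add_sub_cancel_left]
  have hAlen : A.length = s := by
    rw [hA, List.length_flatMap]
    show ∑ j ∈ Finset.range (k - 1), (List.replicate (l j) (θ j)).length = s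
    simp [hs]
  have hFlen : F.length = k * β := by
    rw [hF, List.length_append, List.length_replicate, hAlen]; omega
  have hmul : (k - 1) * (2 * β) + 2 * β = 2 * (k * β) := by
    obtain ⟨k', rfl⟩ : ∃ k', k = k' + 1 := ⟨k - 1, by omega⟩
    simp; ring
  have hsle : s ≤ (k - 1) * (2 * β) := by
    rw [hs]
    calc ∑ j ∈ Finset.range (k - 1), l j ≤ ∑ _j ∈ Finset.range (k - 1), 2 * β :=
          Finset.sum_le_sum fun j hj => hl j (Finset.mem_range.mp hj)
      _ = (k - 1) * (2 * β) := by rw [Finset.sum_const, Finset.card_range, smul_eq_mul]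
  have hBlen : B.length = (k - 1) * (2 * β) - s := by
    rw [hB, List.length_flatMap, List.map_reverse, List.sum_reverse]
    show ∑ j ∈ Finset.range (k - 1), (List.replicate (2 * β - l j) (θ j)).length = _
    simp only [List.length_replicate]
    rw [hs, Finset.sum_tsub_distrib _ (fun j hj => hl j (Finset.mem_range.mp hj))]
    rw [Finset.sum_const, Finset.card_range, smul_eq_mul]
  have hSllen : Sl.length = k * β := by
    rw [hSl, List.length_append, List.length_replicate, hBlen]; omega
  -- counts in Sl
  have hcntB : ∀ x, cntCPP B x
      = ∑ i ∈ Finset.range (k - 1), if θ i = x then 2 * β - l i else 0 := by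
    intro x
    rw [hB, cntCPP_flatMap, List.map_reverse, List.sum_reverse]
    show ∑ i ∈ Finset.range (k - 1), cntCPP (List.replicate (2 * β - l i) (θ i)) x = _
    exact Finset.sum_congr rfl fun i _ => cntCPP_replicate _ _ _
  have hcntSl1 : ∀ j < k - 1, cntCPP Sl (θ j) = 2 * β - l j := by
    intro j hj
    rw [hSl, cntCPP_append, cntCPP_replicate, hcntB,
      if_neg (fun h => absurd (hθ (k-1) hk1 j (by omega) h) (by omega)),
      Finset.sum_eq_single_of_mem j (Finset.mem_range.mpr hj)
        (fun i hi hne => if_neg fun h =>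
          hne (hθ i (by have := Finset.mem_range.mp hi; omega) j (by omega) h)), if_pos rfl]
    omega
  have hcntSl2 : cntCPP Sl (θ (k - 1)) = 2 * β - lk := by
    rw [hSl, cntCPP_append, cntCPP_replicate, hcntB, if_pos rfl,
      Finset.sum_eq_zero fun i hi => if_neg fun h =>
        absurd (hθ i (by have := Finset.mem_range.mp hi; omega) (k-1) hk1 h)
          (by have := Finset.mem_range.mp hi; omega)]
    omega
  constructor
  · rw [Finset.card_filter, Finset.sum_product]
    have step1 : ∀ m ∈ Finset.range (k * β),
        (∑ n ∈ Finset.range (2 * k * β), if m < k * β ∧ k * β ≤ n ∧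
            (alphaList k β l θ).getD m 0 = (alphaList k β l θ).getD n 0 then 1 else 0)
          = cntCPP Sl (F.getD m 0) := by
      intro m hm
      have hmlt : m < k * β := Finset.mem_range.mp hm
      have hgm : (alphaList k β l θ).getD m 0 = F.getD m 0 := by
        rw [hsplit]; exact List.getD_append _ _ _ m (by omega)
      rw [Finset.range_eq_Ico,
        ← Finset.sum_subset (Finset.Ico_subset_Ico (Nat.zero_le (k*β)) le_rfl :
            Finset.Ico (k*β) (2*k*β) ⊆ Finset.Ico 0 (2*k*β))]
      · rw [Finset.sum_Ico_eq_sum_range]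
        have hrng : 2 * k * β - k * β = k * β := by omega
        rw [hrng]
        rw [show cntCPP Sl (F.getD m 0)
            = ∑ n ∈ Finset.range (k*β), if Sl.getD n 0 = F.getD m 0 then 1 else 0 by
          rw [cntCPP, hSllen]]
        refine Finset.sum_congr rfl fun n hn => ?_
        have hgn : (alphaList k β l θ).getD (k * β + n) 0 = Sl.getD n 0 := by
          rw [hsplit, List.getD_append_right _ _ _ _ (by omega), hFlen]
          congr 1; omega
        rw [hgm, hgn]
        have : (m < k * β ∧ k * β ≤ k * β + n ∧ F.getD m 0 = Sl.getD n 0)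
            ↔ Sl.getD n 0 = F.getD m 0 := by
          constructor
          · exact fun h => h.2.2.symm
          · exact fun h => ⟨hmlt, Nat.le_add_right _ _, h.symm⟩
        simp only [this]
      · intro n hn hn2
        simp only [Finset.mem_Ico, Finset.mem_range] at *
        have : ¬ (k * β ≤ n) := by omega
        simp [this]
    rw [← Finset.sum_subset (Finset.range_subset_range.mpr (by omega) :
          Finset.range (k*β) ⊆ Finset.range (2*k*β))
        (fun m hm hm2 => Finset.sum_eq_zero fun n hn => by
          simp only [Finset.mem_range] at hm2
          simp [show ¬ ((m, n).1 < k * β) from fun h => hm2 (by omega)])]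
    rw [Finset.sum_congr rfl step1, ← hFlen, sum_getD, hF, List.map_append,
        List.sum_append, List.map_replicate, List.sum_replicate, smul_eq_mul, hA,
        map_flatMap_replicate_sum, hcntSl2]
    congr 1
    show ∑ j ∈ Finset.range (k-1), l j * cntCPP Sl (θ j) = _
    exact Finset.sum_congr rfl fun j hj => by
      rw [hcntSl1 j (Finset.mem_range.mp hj)]
  · -- parity
    have hmod : ∀ c : ℕ, c ≤ 2 * β → c * (2 * β - c) % 2 = c % 2 := by
      intro c hc
      have h1 : (2 * β - c) % 2 = c % 2 := by omega
      rw [Nat.mul_mod, h1, ← Nat.mul_mod]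
      rcases Nat.even_or_odd c with ⟨r, rfl⟩ | ⟨r, rfl⟩
      · have : (r + r) * (r + r) = 2 * (2 * r * r) := by ring
        omega
      · have : (2*r+1) * (2*r+1) = 2*(2*r*r + 2*r) + 1 := by ring
        omega
    have hpar : ((∑ j ∈ Finset.range (k - 1), l j * (2 * β - l j)) + lk * (2 * β - lk)) % 2
        = (k * β) % 2 := by
      have h1 : (∑ j ∈ Finset.range (k - 1), l j * (2 * β - l j)) % 2 = s % 2 := by
        rw [Finset.sum_nat_mod, Finset.sum_congr rfl
          (fun j hj => hmod (l j) (hl j (Finset.mem_range.mp hj))), ← Finset.sum_nat_mod, hs]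
      have h2 := hmod lk hlk
      omega
    rcases Nat.even_or_odd (k * β) with h | h
    · have h' : Even ((∑ j ∈ Finset.range (k - 1), l j * (2 * β - l j)) + lk * (2 * β - lk)) := by
        rw [Nat.even_iff, hpar]; exact Nat.even_iff.mp h
      rw [h'.neg_one_pow, h.neg_one_pow]
    · have h' : Odd ((∑ j ∈ Finset.range (k - 1), l j * (2 * β - l j)) + lk * (2 * β - lk)) := by
        rw [Nat.odd_iff, hpar]; exact Nat.odd_iff.mp h
      rw [h'.neg_one_pow, h.neg_one_pow]
end

section
/- Let n ≥ 1. In the expansion of the square of the Vandermonde determinant Δ(x_1,...,x_n)² = ∏_{i<j}(x_j − x_i)², the coefficient of the monomial (x_1 x_2 ⋯ x_n)^{n−1} equals (−1)^{⌊n/2⌋} · n!. -/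
open MvPolynomial

section Aux
open Equiv Equiv.Perm Finset

lemma vsq_revPerm_sq (n : ℕ) : (Fin.revPerm : Equiv.Perm (Fin n)) ^ 2 = 1 := by
  ext i; simp [sq, Fin.rev_rev]

lemma vsq_card_support_revPerm (n : ℕ) :
    (Fin.revPerm : Equiv.Perm (Fin n)).support.card = 2 * (n / 2) := by
  classical
  have key : ∀ i : Fin n, (Fin.rev i = i ↔ 2 * (i : ℕ) = n - 1) := by
    intro i
    rw [Fin.ext_iff, Fin.val_rev]
    omega
  have h : (Fin.revPerm : Equiv.Perm (Fin n)).support =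
      Finset.univ \ (Finset.univ.filter fun i : Fin n => Fin.rev i = i) := by
    ext i; simp [Equiv.Perm.mem_support]
  rw [h, Finset.card_sdiff_of_subset (Finset.filter_subset _ _)]
  have hcard : (Finset.univ.filter fun i : Fin n => Fin.rev i = i).card = n % 2 := by
    rcases Nat.even_or_odd n with he | ho
    · obtain ⟨k, hk⟩ := he
      have : (Finset.univ.filter fun i : Fin n => Fin.rev i = i) = ∅ := by
        rw [Finset.filter_eq_empty_iff]
        intro i _
        rw [key i]
        have := i.isLt
        omega
      rw [this]
      simp
      omega
    · obtain ⟨k, hk⟩ := ho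
      have hlt : n / 2 < n := by omega
      have : (Finset.univ.filter fun i : Fin n => Fin.rev i = i) = {⟨n / 2, hlt⟩} := by
        ext i
        simp only [Finset.mem_filter, Finset.mem_univ, true_and, Finset.mem_singleton]
        rw [key i, Fin.ext_iff]
        simp only [Fin.val_mk]
        have := i.isLt
        omega
      rw [this]
      simp
      omega
  rw [hcard, Finset.card_univ, Fintype.card_fin]
  omega

lemma vsq_sign_revPerm (n : ℕ) :
    Equiv.Perm.sign (Fin.revPerm : Equiv.Perm (Fin n)) = (-1 : ℤˣ) ^ (n / 2) := by
  rcases le_or_gt n 1 with h | h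
  · interval_cases n <;> simp [Subsingleton.elim (Fin.revPerm) 1]
  · have hne : (Fin.revPerm : Equiv.Perm (Fin n)) ≠ 1 := by
      intro he
      have := congrArg (fun σ : Equiv.Perm (Fin n) => σ ⟨0, by omega⟩) he
      simp [Fin.rev, Fin.ext_iff] at this
      omega
    have hord : orderOf (Fin.revPerm : Equiv.Perm (Fin n)) = 2 :=
      orderOf_eq_prime (vsq_revPerm_sq n) hne
    obtain ⟨k, hk⟩ := Equiv.Perm.cycleType_prime_order (hord ▸ Nat.prime_two)
    rw [hord] at hk
    have hsum := Equiv.Perm.sum_cycleType (Fin.revPerm : Equiv.Perm (Fin n))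
    rw [hk, Multiset.sum_replicate, vsq_card_support_revPerm] at hsum
    simp only [smul_eq_mul] at hsum
    have hk1 : k + 1 = n / 2 := by omega
    rw [Equiv.Perm.sign_of_cycleType, hk, Multiset.sum_replicate, Multiset.card_replicate, hk1]
    simp [smul_eq_mul]
    rw [show n / 2 * 2 + n / 2 = 2 * (n/2) + n/2 by ring, pow_add, pow_mul]
    simp

end Aux

section Main
open Equiv Finset

/-- In the square of the Vandermonde determinant `Δ(x_1,…,x_n)² = ∏_{i<j} (x_j - x_i)²`,
the coefficient of the monomial `(x_1 ⋯ x_n)^{n-1}` equals `(-1)^{⌊n/2⌋} · n!`. -/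
theorem vandermonde_sq_central_coeff (n : ℕ) (hn : 1 ≤ n) :
    MvPolynomial.coeff (Finsupp.equivFunOnFinite.symm fun _ : Fin n => n - 1)
        ((∏ j : Fin n, ∏ i ∈ Finset.Iio j,
          (X j - X i : MvPolynomial (Fin n) ℤ)) ^ 2) =
      (-1 : ℤ) ^ (n / 2) * (Nat.factorial n : ℤ) := by
  classical
  set d : Fin n →₀ ℕ := Finsupp.equivFunOnFinite.symm fun _ : Fin n => n - 1 with hd_def
  have hd : ∀ k : Fin n, d k = n - 1 := fun k => rfl
  set c : Equiv.Perm (Fin n) → (Fin n →₀ ℕ) :=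
    fun σ => ∑ i : Fin n, Finsupp.single (σ i) (i : ℕ) with hc_def
  have hc : ∀ (σ : Equiv.Perm (Fin n)) (k : Fin n), c σ k = ((σ⁻¹ k : Fin n) : ℕ) := by
    intro σ k
    rw [hc_def]
    rw [Finsupp.finset_sum_apply]
    simp only [Finsupp.single_apply]
    rw [Finset.sum_eq_single (σ⁻¹ k)]
    · simp
    · intro i _ hne
      rw [if_neg]
      intro he
      exact hne (by simp [← he])
    · simp
  -- step 1 : product = det vandermonde
  have h1 : (∏ j : Fin n, ∏ i ∈ Finset.Iio j, (X j - X i : MvPolynomial (Fin n) ℤ))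
      = (Matrix.vandermonde (X : Fin n → MvPolynomial (Fin n) ℤ)).det := by
    rw [Matrix.det_vandermonde]
    exact Finset.prod_comm' (by simp)
  have hdet : (Matrix.vandermonde (X : Fin n → MvPolynomial (Fin n) ℤ)).det
      = ∑ σ : Equiv.Perm (Fin n), (Equiv.Perm.sign σ : ℤ) • monomial (c σ) (1 : ℤ) := by
    rw [Matrix.det_apply]
    refine Finset.sum_congr rfl fun σ _ => ?_
    rw [Units.smul_def]
    congr 1
    simp only [Matrix.vandermonde_apply, X_pow_eq_monomial]
    exact (monomial_sum_one _ _).symm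
  rw [h1, hdet, sq, Finset.sum_mul_sum]
  simp only [smul_mul_smul_comm, monomial_mul, mul_one, MvPolynomial.coeff_sum,
    MvPolynomial.coeff_smul, MvPolynomial.coeff_monomial, smul_eq_mul]
  have hrev : (Fin.revPerm : Equiv.Perm (Fin n))⁻¹ = Fin.revPerm := by
    rw [Equiv.Perm.inv_def, Fin.revPerm_symm]
  -- key equivalence
  have key : ∀ σ τ : Equiv.Perm (Fin n), c σ + c τ = d ↔ τ = σ * Fin.revPerm := by
    intro σ τ
    constructor
    · intro h
      have h' : ∀ k, ((σ⁻¹ k : Fin n) : ℕ) + ((τ⁻¹ k : Fin n) : ℕ) = n - 1 := by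
        intro k
        have := DFunLike.congr_fun h k
        rwa [Finsupp.add_apply, hc, hc, hd] at this
      have hτ : τ⁻¹ = (σ * Fin.revPerm)⁻¹ := by
        ext k
        rw [mul_inv_rev]
        have h2 := (σ⁻¹ k).isLt
        have h3 := h' k
        simp only [Equiv.Perm.coe_mul, Function.comp_apply, hrev, Fin.revPerm_apply]
        rw [Fin.val_rev]
        omega
      exact inv_injective hτ
    · rintro rfl
      ext k
      rw [Finsupp.add_apply, hc, hc, hd]
      rw [mul_inv_rev]
      simp only [Equiv.Perm.coe_mul, Function.comp_apply, hrev, Fin.revPerm_apply]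
      rw [Fin.val_rev]
      have h2 := (σ⁻¹ k).isLt
      omega
  have inner : ∀ σ : Equiv.Perm (Fin n),
      (∑ τ : Equiv.Perm (Fin n),
        ((Equiv.Perm.sign σ : ℤ) * (Equiv.Perm.sign τ : ℤ)) *
          (if c σ + c τ = d then (1 : ℤ) else 0))
      = ((Equiv.Perm.sign (Fin.revPerm : Equiv.Perm (Fin n)) : ℤˣ) : ℤ) := by
    intro σ
    rw [Finset.sum_eq_single (σ * Fin.revPerm)]
    · rw [if_pos ((key σ _).mpr rfl), mul_one, map_mul]
      push_cast
      ring_nf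
      rw [show ((Equiv.Perm.sign σ : ℤˣ) : ℤ) ^ 2 = ((Equiv.Perm.sign σ ^ 2 : ℤˣ) : ℤ) by push_cast; ring,
        Int.units_sq]
      simp
    · intro τ _ hne
      rw [if_neg (fun hcond => hne ((key σ τ).mp hcond)), mul_zero]
    · simp
  calc (∑ σ : Equiv.Perm (Fin n), ∑ τ : Equiv.Perm (Fin n),
        ((Equiv.Perm.sign σ : ℤ) * (Equiv.Perm.sign τ : ℤ)) *
          (if c σ + c τ = d then (1 : ℤ) else 0))
      = ∑ σ : Equiv.Perm (Fin n),
          ((Equiv.Perm.sign (Fin.revPerm : Equiv.Perm (Fin n)) : ℤˣ) : ℤ) :=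
        Finset.sum_congr rfl fun σ _ => inner σ
    _ = (Nat.factorial n : ℤ) * ((Equiv.Perm.sign (Fin.revPerm : Equiv.Perm (Fin n)) : ℤˣ) : ℤ) := by
        rw [Finset.sum_const, Finset.card_univ, Fintype.card_perm, Fintype.card_fin,
          nsmul_eq_mul]
    _ = (-1 : ℤ) ^ (n / 2) * (Nat.factorial n : ℤ) := by
        rw [vsq_sign_revPerm n, mul_comm]
        push_cast
        ring

end Main
end

section
/- For positive integers β and N, MoM_N(2,β) = I_{2β}(βN; N), where I_η(m;N) = ∫_{U(N)} | ∑_{j_1+⋯+j_η = m, 0 ≤ j_i ≤ N} Sc_{j_1}(A) ⋯ Sc_{j_η}(A) |² dA and Sc_n(A) are the secular coefficients defined by det(I + xA) = ∑_{n=0}^N Sc_n(A) x^n. -/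
open MeasureTheory Matrix

/-- The Borel σ-algebra on the unitary group `U(N)`. -/
noncomputable instance unitaryGroup.measurableSpace (N : ℕ) :
    MeasurableSpace (Matrix.unitaryGroup (Fin N) ℂ) := borel _

instance unitaryGroup.borelSpace (N : ℕ) :
    BorelSpace (Matrix.unitaryGroup (Fin N) ℂ) := ⟨rfl⟩

/-- `P_N(A,θ) = det(I - A e^{-iθ})`, the characteristic polynomial of `A ∈ U(N)`
evaluated at the point `e^{iθ}` of the unit circle. -/
noncomputable def charPolyOnCircle (N : ℕ) (A : Matrix (Fin N) (Fin N) ℂ) (θ : ℝ) : ℂ :=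
  (1 - Complex.exp (-(θ * Complex.I)) • A).det

/-- `MoM_N(k,β)`: the `k`-th moment, with respect to the measure `μ` on `U(N)`
(which in the theorems below is required to be the Haar probability measure),
of the `2β`-th moment of `|P_N(A,θ)|` over `θ ∈ [0,2π)` with uniform measure. -/
noncomputable def MoM (N k β : ℕ) (μ : Measure (Matrix.unitaryGroup (Fin N) ℂ)) : ℝ :=
  ∫ A : Matrix.unitaryGroup (Fin N) ℂ,
    ((1 / (2 * Real.pi)) * ∫ θ in (0:ℝ)..(2 * Real.pi),
        ‖charPolyOnCircle N (A : Matrix (Fin N) (Fin N) ℂ) θ‖ ^ (2 * β)) ^ k ∂μ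
/-- The `n`-th secular coefficient `Sc_n(A)`, defined by
`det(I + xA) = ∑_{n=0}^N Sc_n(A) xⁿ`. -/
noncomputable def secCoeff (N : ℕ) (A : Matrix (Fin N) (Fin N) ℂ) (n : ℕ) : ℂ :=
  ((1 + (Polynomial.X : Polynomial ℂ) • A.map Polynomial.C).det).coeff n

/-- `I_η(m;N) = ∫_{U(N)} |∑_{j₁+⋯+j_η=m, 0 ≤ jᵢ ≤ N} Sc_{j₁}(A)⋯Sc_{j_η}(A)|² dA`. -/
noncomputable def secI (N η m : ℕ) (μ : Measure (Matrix.unitaryGroup (Fin N) ℂ)) : ℝ :=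
  ∫ A : Matrix.unitaryGroup (Fin N) ℂ,
    ‖(∑ f ∈ (Fintype.piFinset fun _ : Fin η => Finset.range (N + 1)).filter
          (fun f => ∑ i, f i = m),
        ∏ i, secCoeff N (A : Matrix (Fin N) (Fin N) ℂ) (f i))‖ ^ 2 ∂μ

/-!
For unitary `A` and `|z| = 1` the characteristic polynomial satisfies the functional equation
`conj (det (1 - zA)) = conj (det A) (-conj z)^N det (1 - zA)`. On the circle `z = e^{-iθ}` it turns
`|P_N(A,θ)|^{2β}` into `conj (det A)^β (-e^{iθ})^{βN} P_N(A,θ)^{2β}`, and expanding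
`P_N(A,θ)^{2β} = det (I + xA)^{2β}` at `x = -e^{-iθ}` through the generating series of the secular
coefficients makes this a trigonometric polynomial in `θ`. By Fourier orthogonality its average over
the circle is its constant term, `conj (det A)^β` times the coefficient of `x^{βN}` in
`det (I + xA)^{2β}`. Since `|det A| = 1`, the square of the average is the integrand of
`I_{2β}(βN; N)`, already pointwise in `A`.
-/

open Complex Finset

/-- The coefficient of `x^m` in `det (I + xA)^η`. -/
noncomputable def secPowCoeff (N η m : ℕ) (A : Matrix (Fin N) (Fin N) ℂ) : ℂ :=
  ∑ f ∈ (Fintype.piFinset fun _ : Fin η => range (N + 1)).filter (fun f => ∑ i, f i = m),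
    ∏ i, secCoeff N A (f i)

theorem det_one_add_smul_eq_sum_secCoeff (N : ℕ) (A : Matrix (Fin N) (Fin N) ℂ) (x : ℂ) :
    (1 + x • A).det = ∑ n ∈ range (N + 1), secCoeff N A n * x ^ n := by
  set Q : Polynomial ℂ := (1 + (Polynomial.X : Polynomial ℂ) • A.map Polynomial.C).det
  have hdeg : Q.natDegree < N + 1 := by
    have := Polynomial.natDegree_det_X_add_C_le A 1
    rw [Matrix.map_one _ Polynomial.C_0 Polynomial.C_1, add_comm, Fintype.card_fin] at this
    exact Nat.lt_succ_of_le this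
  have heval : Q.eval x = (1 + x • A).det := by
    rw [← Polynomial.coe_evalRingHom, RingHom.map_det]
    congr 1
    ext i j
    by_cases h : i = j <;> simp [h] <;> ring
  rw [← heval, Polynomial.eval_eq_sum_range' hdeg]
  rfl

theorem det_one_add_smul_pow_eq_sum_secPowCoeff (N η : ℕ) (A : Matrix (Fin N) (Fin N) ℂ)
    (x : ℂ) :
    (1 + x • A).det ^ η = ∑ m ∈ range (η * N + 1), secPowCoeff N η m A * x ^ m := by
  have hexpand : (1 + x • A).det ^ η = ∑ f ∈ Fintype.piFinset fun _ : Fin η => range (N + 1),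
      (∏ i, secCoeff N A (f i)) * x ^ ∑ i, f i := by
    rw [det_one_add_smul_eq_sum_secCoeff, ← Fin.prod_const, prod_univ_sum]
    simp only [prod_mul_distrib, prod_pow_eq_pow_sum]
  have hmaps : ∀ f ∈ Fintype.piFinset fun _ : Fin η => range (N + 1),
      ∑ i, f i ∈ range (η * N + 1) := by
    intro f hf
    simp only [Fintype.mem_piFinset, mem_range, Nat.lt_succ_iff] at hf ⊢
    calc ∑ i, f i ≤ ∑ _ : Fin η, N := sum_le_sum fun i _ => hf i
      _ = η * N := by simp
  rw [hexpand, ← sum_fiberwise_of_maps_to hmaps]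
  refine sum_congr rfl fun m _ => ?_
  rw [secPowCoeff, sum_mul]
  exact sum_congr rfl fun f hf => by rw [(mem_filter.1 hf).2]

theorem star_det_one_sub_smul_of_mem_unitaryGroup {ι : Type*} [Fintype ι] [DecidableEq ι]
    {A : Matrix ι ι ℂ} (hA : A ∈ Matrix.unitaryGroup ι ℂ) {z : ℂ} (hz : star z * z = 1) :
    star (1 - z • A).det = star A.det * (-star z) ^ Fintype.card ι * (1 - z • A).det := by
  have hfactor : star (1 - z • A) = star A * ((-star z) • (1 - z • A)) := by
    rw [star_sub, star_one, star_smul, Matrix.mul_smul, Matrix.mul_sub, Matrix.mul_one,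
      Matrix.mul_smul, (Matrix.mem_unitaryGroup_iff').1 hA, smul_sub, smul_smul, neg_mul, hz]
    simp [sub_eq_neg_add, add_comm]
  rw [← Matrix.det_conjTranspose, ← Matrix.star_eq_conjTranspose, hfactor, Matrix.det_mul,
    Matrix.det_smul, Matrix.star_eq_conjTranspose, Matrix.det_conjTranspose, mul_assoc]

theorem integral_exp_int_mul_I (k : ℤ) :
    ∫ θ in (0 : ℝ)..2 * Real.pi, exp (k * I * θ) = if k = 0 then 2 * Real.pi else 0 := by
  split_ifs with hk
  · simp [hk]
  · have hc : (k : ℂ) * I ≠ 0 := by simp [hk]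
    have hperiod : exp (k * I * (2 * Real.pi)) = 1 := by
      rw [← exp_int_mul_two_pi_mul_I k]
      ring_nf
    simp [integral_exp_mul_complex hc, hperiod]

theorem integral_sum_mul_exp_int_mul_I {α : Type*} (s : Finset α) (c : α → ℂ) (k : α → ℤ) :
    ∫ θ in (0 : ℝ)..2 * Real.pi, ∑ a ∈ s, c a * exp (k a * I * θ)
      = 2 * Real.pi * ∑ a ∈ s with k a = 0, c a := by
  rw [intervalIntegral.integral_finsetSum fun a _ =>
    (by fun_prop : Continuous _).intervalIntegrable _ _]
  simp only [intervalIntegral.integral_const_mul, integral_exp_int_mul_I, mul_ite, mul_zero,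
    sum_filter, mul_sum]
  exact sum_congr rfl fun a _ => by split_ifs <;> push_cast <;> ring

section CharPolyOnCircle

variable {N : ℕ} {A : Matrix (Fin N) (Fin N) ℂ}

theorem charPolyOnCircle_eq_det_one_add_smul (θ : ℝ) :
    charPolyOnCircle N A θ = (1 + (-exp (-(θ * I))) • A).det := by
  rw [charPolyOnCircle, neg_smul, sub_eq_add_neg]

theorem ofReal_norm_charPolyOnCircle_pow (hA : A ∈ Matrix.unitaryGroup (Fin N) ℂ) (β : ℕ)
    (θ : ℝ) :
    ((‖charPolyOnCircle N A θ‖ ^ (2 * β) : ℝ) : ℂ)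
      = star A.det ^ β * (-exp (θ * I)) ^ (β * N) * charPolyOnCircle N A θ ^ (2 * β) := by
  set z := exp (-(θ * I))
  have hz_star : star z = exp (θ * I) := by simp [z, ← exp_conj]
  have hz : star z * z = 1 := by rw [hz_star, ← exp_add]; simp
  have hstar := star_det_one_sub_smul_of_mem_unitaryGroup hA hz
  rw [Fintype.card_fin, hz_star, ← charPolyOnCircle] at hstar
  calc ((‖charPolyOnCircle N A θ‖ ^ (2 * β) : ℝ) : ℂ)
      = (charPolyOnCircle N A θ * star (charPolyOnCircle N A θ)) ^ β := by
        rw [pow_mul, ← normSq_eq_norm_sq, ofReal_pow, ← mul_conj]; rfl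
    _ = _ := by rw [hstar]; ring

theorem ofReal_norm_charPolyOnCircle_pow_eq_sum (hA : A ∈ Matrix.unitaryGroup (Fin N) ℂ)
    (β : ℕ) (θ : ℝ) :
    ((‖charPolyOnCircle N A θ‖ ^ (2 * β) : ℝ) : ℂ)
      = ∑ m ∈ range (2 * β * N + 1), star A.det ^ β * (-1) ^ (β * N + m)
          * secPowCoeff N (2 * β) m A * exp (((β * N : ℕ) - m : ℤ) * I * θ) := by
  rw [ofReal_norm_charPolyOnCircle_pow hA, charPolyOnCircle_eq_det_one_add_smul,
    det_one_add_smul_pow_eq_sum_secPowCoeff, mul_sum]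
  refine sum_congr rfl fun m _ => ?_
  have hexp : (-exp (θ * I)) ^ (β * N) * (-exp (-(θ * I))) ^ m
      = (-1) ^ (β * N + m) * exp (((β * N : ℕ) - m : ℤ) * I * θ) := by
    rw [neg_pow, neg_pow (exp _), ← exp_nat_mul, ← exp_nat_mul, pow_add]
    rw [show ((((β * N : ℕ) : ℤ) - m : ℤ) : ℂ) * I * θ = (β * N : ℕ) * (θ * I) + m * -(θ * I) by
      push_cast; ring, exp_add]
    ring
  linear_combination (star A.det ^ β * secPowCoeff N (2 * β) m A) * hexp

theorem ofReal_average_norm_charPolyOnCircle_pow (hA : A ∈ Matrix.unitaryGroup (Fin N) ℂ)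
    (β : ℕ) :
    (((1 / (2 * Real.pi)) * ∫ θ in (0 : ℝ)..2 * Real.pi,
        ‖charPolyOnCircle N A θ‖ ^ (2 * β) : ℝ) : ℂ)
      = star A.det ^ β * secPowCoeff N (2 * β) (β * N) A := by
  have hresonant :
      (range (2 * β * N + 1)).filter (fun m : ℕ => ((β * N : ℕ) : ℤ) - m = 0) = {β * N} := by
    ext m
    have hdouble : 2 * β * N = 2 * (β * N) := by ring
    simp only [mem_filter, mem_range, mem_singleton]
    omega
  rw [ofReal_mul, ← intervalIntegral.integral_ofReal]
  simp_rw [ofReal_norm_charPolyOnCircle_pow_eq_sum hA]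
  rw [integral_sum_mul_exp_int_mul_I, hresonant, sum_singleton, ← two_mul, pow_mul, neg_one_sq,
    one_pow, mul_one]
  have hπ : (Real.pi : ℂ) ≠ 0 := ofReal_ne_zero.2 Real.pi_ne_zero
  push_cast
  field_simp

theorem sq_average_norm_charPolyOnCircle_pow (hA : A ∈ Matrix.unitaryGroup (Fin N) ℂ) (β : ℕ) :
    ((1 / (2 * Real.pi)) * ∫ θ in (0 : ℝ)..2 * Real.pi, ‖charPolyOnCircle N A θ‖ ^ (2 * β)) ^ 2
      = ‖secPowCoeff N (2 * β) (β * N) A‖ ^ 2 := by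
  have hdet : ‖A.det‖ = 1 := CStarRing.norm_of_mem_unitary (Matrix.det_of_mem_unitary hA)
  rw [← sq_abs, ← Real.norm_eq_abs, ← norm_real, ofReal_average_norm_charPolyOnCircle_pow hA,
    norm_mul, norm_pow, norm_star, hdet, one_pow, one_mul]

end CharPolyOnCircle

theorem MoM_two_eq_secI_general (N β : ℕ)
    (μ : Measure (Matrix.unitaryGroup (Fin N) ℂ)) :
    MoM N 2 β μ = secI N (2 * β) (β * N) μ := by
  rw [MoM, secI]
  exact integral_congr_ae (ae_of_all _ fun A => sq_average_norm_charPolyOnCircle_pow A.2 β)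

/-- For positive integers `β` and `N`, `MoM_N(2,β) = I_{2β}(βN; N)`. -/
theorem MoM_two_eq_secI (N β : ℕ) (hN : 1 ≤ N) (hβ : 1 ≤ β)
    (μ : Measure (Matrix.unitaryGroup (Fin N) ℂ))
    [μ.IsHaarMeasure] [IsProbabilityMeasure μ] :
    MoM N 2 β μ = secI N (2 * β) (β * N) μ :=
  MoM_two_eq_secI_general N β μ
end
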